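/- arXiv:2410.14460 — 4 statements merged into one kernel-verified Lean document; each statement's English description precedes it below -/
import Mathlib

section
/- Let α : F ⇒ G be a natural transformation between Set functors. The relational connector id_G • α, defined by (id_G • α)r = (id_G r) · α_X for r : X ⇸ Y, is the least relational connector F → G that extends α; in particular, id_G is the least relational connector G → G that extends the identity natural transformation on G. -/
open CategoryTheory

universe u

/-- A `Set` functor: a functor from the category of sets (types) to itself. -/
abbrev SetFunctor : Type (u + 1) := CategoryTheory.Functor (Type u) (Type u)

/-- Applicative-order composition of relations: `(rcomp s r) x z ↔ ∃ y, r x y ∧ s y z`,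
i.e. `s · r` in the notation of the paper. -/
def rcomp {X Y Z : Type u} (s : Y → Z → Prop) (r : X → Y → Prop) : X → Z → Prop :=
  fun x z => ∃ y, r x y ∧ s y z

/-- Relational converse `r°`. -/
def rconv {X Y : Type u} (r : X → Y → Prop) : Y → X → Prop := fun y x => r x y

/-- The graph of a function, identifying functions with relations. -/
def graph {X Y : Type u} (f : X → Y) : X → Y → Prop := fun x y => f x = y

/-- The diagonal relation `Δ_X`. -/
def diag (X : Type u) : X → X → Prop := fun x y => x = y

/-- Relational image `r[A]`. -/
def rimage {X Y : Type u} (r : X → Y → Prop) (A : Set X) : Set Y :=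
  {y | ∃ x ∈ A, r x y}

/-- The pointwise product of two `Set` functors. -/
def prodFunctor (F₁ F₂ : SetFunctor.{u}) : SetFunctor.{u} where
  obj X := F₁.obj X × F₂.obj X
  map f := TypeCat.ofHom (fun p => (F₁.map f p.1, F₂.map f p.2))
  map_id X := by ext p <;> simp
  map_comp f g := by ext p <;> simp

/-- An assignment of relations `F X ⇸ G Y` to relations `X ⇸ Y`; a relational connector
is such an assignment satisfying monotonicity and naturality (`RelConn.IsConnector`). -/
structure RelConn (F G : SetFunctor.{u}) : Type (u + 1) where
  rel : ∀ {X Y : Type u}, (X → Y → Prop) → F.obj X → G.obj Y → Prop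

namespace RelConn

variable {F G H V : SetFunctor.{u}}

/-- Monotonicity: `r₁ ⊆ r₂` implies `L r₁ ⊆ L r₂`. -/
def Mono (L : RelConn F G) : Prop :=
  ∀ (X Y : Type u) (r₁ r₂ : X → Y → Prop), (∀ x y, r₁ x y → r₂ x y) →
    ∀ a b, L.rel r₁ a b → L.rel r₂ a b

/-- Naturality: `L(g° · r · f) = (G g)° · L r · F f`. -/
def Natural (L : RelConn F G) : Prop :=
  ∀ (X X' Y Y' : Type u) (f : X' → X) (g : Y' → Y) (r : X → Y → Prop),
    L.rel (rcomp (rconv (graph g)) (rcomp r (graph f))) =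
      rcomp (rconv (graph (G.map (TypeCat.ofHom g)))) (rcomp (L.rel r) (graph (F.map (TypeCat.ofHom f))))

/-- A relational connector: a monotone and natural assignment of relations. -/
def IsConnector (L : RelConn F G) : Prop := L.Mono ∧ L.Natural

/-- The pointwise order on connectors: `L ≤ K` iff `L r ⊆ K r` for all `r`. -/
def le (L K : RelConn F G) : Prop :=
  ∀ (X Y : Type u) (r : X → Y → Prop) (a : F.obj X) (b : G.obj Y), L.rel r a b → K.rel r a b

/-- The composite `L · K` of relational connectors:
`(L · K) r = ⋃ { L s · K t | s · t = r }`, the join over all factorizations of `r`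
through an arbitrary intermediate set `Y`. -/
def comp (L : RelConn G H) (K : RelConn F G) : RelConn F H where
  rel := fun {X Z} r a c => ∃ (Y : Type u) (t : X → Y → Prop) (s : Y → Z → Prop),
    rcomp s t = r ∧ ∃ b, K.rel t a b ∧ L.rel s b c

/-- The converse `L°` of a connector: `L° r = (L (r°))°`. -/
def conv (L : RelConn F G) : RelConn G F where
  rel := fun {X Y} r b a => L.rel (rconv r) a b

/-- The meet (pointwise intersection) of two connectors. -/
def meet (L K : RelConn F G) : RelConn F G where
  rel := fun {X Y} r a b => L.rel r a b ∧ K.rel r a b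

/-- The product `L₁ × L₂` of connectors. -/
def prod {F₁ F₂ G₁ G₂ : SetFunctor.{u}} (L₁ : RelConn F₁ G₁) (L₂ : RelConn F₂ G₂) :
    RelConn (prodFunctor F₁ F₂) (prodFunctor G₁ G₂) where
  rel := fun {X Y} r p q => L₁.rel r p.1 q.1 ∧ L₂.rel r p.2 q.2

/-- The identity relational connector `id_F`: `b (id_F r) c` iff for all set functors `G`,
all relational connectors `L : G → F`, all `s : Z ⇸ X` and `a ∈ G Z`,
`a (L s) b` implies `a (L (r · s)) c`. -/
def id (F : SetFunctor.{u}) : RelConn F F where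
  rel := fun {X Y} r b c =>
    ∀ (G : SetFunctor.{u}) (L : RelConn G F), L.IsConnector →
      ∀ (Z : Type u) (s : Z → X → Prop) (a : G.obj Z),
        L.rel s a b → L.rel (rcomp r s) a c

/-- A connector `L : F → F` is transitive if `L · L ≤ L`. -/
def Transitive (L : RelConn F F) : Prop := (L.comp L).le L

/-- A connector `L : F → F` is symmetric if `L° ≤ L`. -/
def Symmetric (L : RelConn F F) : Prop := L.conv.le L

/-- A connector `L : F → F` extends `F` if `Δ_{F X} ⊆ L Δ_X` for all `X`. -/
def ExtendsF (L : RelConn F F) : Prop :=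
  ∀ (X : Type u) (a b : F.obj X), diag (F.obj X) a b → L.rel (diag X) a b

/-- Condition (L2) of lax extensions: `L s · L r ⊆ L (s · r)`. -/
def LaxL2 (L : RelConn F F) : Prop :=
  ∀ (X Y Z : Type u) (r : X → Y → Prop) (s : Y → Z → Prop) (a : F.obj X) (c : F.obj Z),
    rcomp (L.rel s) (L.rel r) a c → L.rel (rcomp s r) a c

/-- Condition (L3) of lax extensions: `F f ⊆ L f` and `(F f)° ⊆ L (f°)`. -/
def LaxL3 (L : RelConn F F) : Prop :=
  ∀ (X Y : Type u) (f : X → Y),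
    (∀ a b, graph (F.map (TypeCat.ofHom f)) a b → L.rel (graph f) a b) ∧
    (∀ b a, rconv (graph (F.map (TypeCat.ofHom f))) b a → L.rel (rconv (graph f)) b a)

/-- A lax extension of `F`: an assignment of relations satisfying (L1) monotonicity,
(L2) and (L3). -/
def IsLaxExtension (L : RelConn F F) : Prop := L.Mono ∧ L.LaxL2 ∧ L.LaxL3

/-- A connector `L : F → G` extends a natural transformation `α : F ⇒ G` if the graph of
`α_X` is contained in `L Δ_X` for all sets `X`. -/
def Extends (L : RelConn F G) (α : F ⟶ G) : Prop :=
  ∀ (X : Type u) (a : F.obj X) (b : G.obj X), graph (α.app X) a b → L.rel (diag X) a b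

end RelConn

/-- The connector `id_G • α` obtained from a natural transformation `α : F ⇒ G`:
`(id_G • α) r = (id_G r) · α_X`. -/
def idBullet {F G : SetFunctor.{u}} (α : F ⟶ G) : RelConn F G where
  rel := fun {X Y} r => rcomp ((RelConn.id G).rel r) (graph (α.app X))

/-- The intermediate set of the couniversal factorization of `r : X ⇸ Z`:
`{(A,B) ∈ P(X) × P(Z) | A × B ⊆ r}`. -/
def CoInt {X Z : Type u} (r : X → Z → Prop) : Type u :=
  {p : Set X × Set Z // ∀ x ∈ p.1, ∀ z ∈ p.2, r x z}

/-- The first leg `t = {(x,(A,B)) | x ∈ A}` of the couniversal factorization. -/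
def coT {X Z : Type u} (r : X → Z → Prop) : X → CoInt r → Prop := fun x p => x ∈ p.1.1

/-- The second leg `s = {((A,B),z) | z ∈ B}` of the couniversal factorization. -/
def coS {X Z : Type u} (r : X → Z → Prop) : CoInt r → Z → Prop := fun p z => z ∈ p.1.2

/-- `f : (C,γ) → (D,δ)` is a morphism of `F`-coalgebras: `F f ∘ γ = δ ∘ f`. -/
def IsCoalgMor {F : SetFunctor.{u}} {C D : Type u} (γ : C → F.obj C) (δ : D → F.obj D)
    (f : C → D) : Prop := ∀ x, F.map (TypeCat.ofHom f) (γ x) = δ (f x)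

/-- `r : C ⇸ D` is an `L`-simulation between the `F`-coalgebra `(C,γ)` and the
`G`-coalgebra `(D,δ)`: `x r y` implies `γ x (L r) δ y`. -/
def IsSim {F G : SetFunctor.{u}} (L : RelConn F G) {C D : Type u}
    (γ : C → F.obj C) (δ : D → G.obj D) (r : C → D → Prop) : Prop :=
  ∀ x y, r x y → L.rel r (γ x) (δ y)

/-- `L`-similarity: `x ≼_L y` iff some `L`-simulation relates `x` to `y`. -/
def SimilarL {F G : SetFunctor.{u}} (L : RelConn F G) {C D : Type u}
    (γ : C → F.obj C) (δ : D → G.obj D) : C → D → Prop :=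
  fun x y => ∃ r, IsSim L γ δ r ∧ r x y

/-- `r : C ⇸ D` is an `L`-bisimulation (for `L : F → F`): both `r` and `r°`
are `L`-simulations. -/
def IsBisim {F : SetFunctor.{u}} (L : RelConn F F) {C D : Type u}
    (γ : C → F.obj C) (δ : D → F.obj D) (r : C → D → Prop) : Prop :=
  IsSim L γ δ r ∧ IsSim L δ γ (rconv r)

/-- `L`-bisimilarity: `x ≃_L y` iff some `L`-bisimulation relates `x` to `y`. -/
def Bisimilar {F : SetFunctor.{u}} (L : RelConn F F) {C D : Type u}
    (γ : C → F.obj C) (δ : D → F.obj D) : C → D → Prop :=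
  fun x y => ∃ r, IsBisim L γ δ r ∧ r x y

/-- Heterogeneous `L`-bisimulation for `L : F → G`: `r` is an `L`-simulation and `r°`
is an `L°`-simulation. -/
def IsBisimHet {F G : SetFunctor.{u}} (L : RelConn F G) {C D : Type u}
    (γ : C → F.obj C) (δ : D → G.obj D) (r : C → D → Prop) : Prop :=
  IsSim L γ δ r ∧ IsSim L.conv δ γ (rconv r)

/-- Heterogeneous `L`-bisimilarity for `L : F → G`. -/
def BisimilarHet {F G : SetFunctor.{u}} (L : RelConn F G) {C D : Type u}
    (γ : C → F.obj C) (δ : D → G.obj D) : C → D → Prop :=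
  fun x y => ∃ r, IsBisimHet L γ δ r ∧ r x y

/-- An `n`-ary predicate lifting for a `Set` functor `F`: a natural transformation
`(2^(-))ⁿ ⇒ 2^(F -)` with the contravariant powerset functor. -/
structure PredLifting (F : SetFunctor.{u}) (n : ℕ) : Type (u + 1) where
  app : ∀ (X : Type u), (Fin n → Set X) → Set (F.obj X)
  natural : ∀ (X Y : Type u) (f : X → Y) (A : Fin n → Set Y) (a : F.obj X),
    F.map (TypeCat.ofHom f) a ∈ app Y A ↔ a ∈ app X (fun i => f ⁻¹' (A i))

/-- Monotonicity of a predicate lifting. -/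
def PredLifting.IsMonotone {F : SetFunctor.{u}} {n : ℕ} (lam : PredLifting F n) : Prop :=
  ∀ (X : Type u) (A B : Fin n → Set X), (∀ i, A i ⊆ B i) → lam.app X A ⊆ lam.app X B

/-- The dual predicate lifting `λ̄_X(A₁,…,Aₙ) = F X \ λ_X(X\A₁,…,X\Aₙ)`. -/
def PredLifting.dual {F : SetFunctor.{u}} {n : ℕ} (lam : PredLifting F n) :
    PredLifting F n where
  app X A := (lam.app X fun i => (A i)ᶜ)ᶜ
  natural := by
    intro X Y f A a
    simp only [Set.mem_compl_iff, lam.natural, Set.preimage_compl]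

/-- The Kantorovich connector `L_Λ` induced by an arity-preserving relation `Λ` between
monotone predicate liftings of `F` and of `G`: `a (L_Λ r) b` iff for every `n`-ary pair
`(λ,μ) ∈ Λ` and all `A₁,…,Aₙ ⊆ X`, `a ∈ λ_X(A₁,…,Aₙ)` implies `b ∈ μ_Y(r[A₁],…,r[Aₙ])`. -/
def kantorovich {F G : SetFunctor.{u}}
    (Λ : ∀ n : ℕ, PredLifting F n → PredLifting G n → Prop) : RelConn F G where
  rel := fun {X Y} r a b =>
    ∀ (n : ℕ) (lam : PredLifting F n) (mu : PredLifting G n), Λ n lam mu →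
      ∀ A : Fin n → Set X, a ∈ lam.app X A → b ∈ mu.app Y (fun i => rimage r (A i))

/-! Naturality of a connector `L` lets a function `f` be moved across it in both directions:
`a (L (f° · s)) b ↔ a (L s) (G f b)`, and by monotonicity `a (L s) b → a (L (f · s)) (G f b)`.
Applied to the test connectors `L` in the definition of `id_G`, this makes `id_G` natural, so
`id_G • α` is a connector. For minimality: if `L` extends `α`, then `a (L Δ_X) (α_X a)`, and feeding
`s = Δ_X` into the definition of `α_X a (id_G r) c` yields `a (L r) c`; so `id_G • α ≤ L`. -/

theorem rcomp_diag {X Y : Type u} (r : X → Y → Prop) : rcomp r (diag X) = r := by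
  funext x y
  exact propext ⟨fun ⟨_, hx, h⟩ => hx ▸ h, fun h => ⟨x, rfl, h⟩⟩

theorem rcomp_conv_graph_rcomp_graph_iff {X X' Y Y' : Type u} (f : X' → X) (g : Y' → Y)
    (r : X → Y → Prop) (a : X') (b : Y') :
    rcomp (rconv (graph g)) (rcomp r (graph f)) a b ↔ r (f a) (g b) :=
  ⟨fun ⟨_, ⟨_, hf, h⟩, hg⟩ => hf ▸ hg ▸ h, fun h => ⟨g b, ⟨f a, rfl, h⟩, rfl⟩⟩

namespace RelConn

section

variable {F G : SetFunctor.{u}}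

theorem natural_iff (L : RelConn F G) :
    L.Natural ↔ ∀ (X X' Y Y' : Type u) (f : X' → X) (g : Y' → Y) (r : X → Y → Prop)
      (a : F.obj X') (b : G.obj Y'),
      L.rel (rcomp (rconv (graph g)) (rcomp r (graph f))) a b ↔
        L.rel r (F.map (TypeCat.ofHom f) a) (G.map (TypeCat.ofHom g) b) := by
  refine ⟨fun hL X X' Y Y' f g r a b => ?_, fun hL X X' Y Y' f g r => ?_⟩
  · rw [hL]
    exact rcomp_conv_graph_rcomp_graph_iff _ _ _ a b
  · funext a b
    exact propext ((hL X X' Y Y' f g r a b).trans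
      (rcomp_conv_graph_rcomp_graph_iff _ _ _ a b).symm)

theorem Natural.rel_conv_graph_comp_iff {L : RelConn F G} (hL : L.Natural) {Z Y Y' : Type u}
    (g : Y' → Y) (r : Z → Y → Prop) (a : F.obj Z) (b : G.obj Y') :
    L.rel (rcomp (rconv (graph g)) r) a b ↔ L.rel r a (G.map (TypeCat.ofHom g) b) := by
  have h := (L.natural_iff.1 hL) Z Z Y Y' (fun z => z) g r a b
  have hid : F.map (TypeCat.ofHom fun z : Z => z) a = a := F.map_id_apply Z a
  rwa [show rcomp r (graph fun z => z) = r from rcomp_diag r, hid] at h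

theorem IsConnector.rel_graph_comp {L : RelConn F G} (hL : L.IsConnector) {Z X X' : Type u}
    (f : X' → X) {s : Z → X' → Prop} {a : F.obj Z} {b : G.obj X'} (h : L.rel s a b) :
    L.rel (rcomp (graph f) s) a (G.map (TypeCat.ofHom f) b) :=
  (hL.2.rel_conv_graph_comp_iff f _ a b).1
    (hL.1 _ _ _ _ (fun _ x hs => ⟨f x, ⟨x, hs, rfl⟩, rfl⟩) a b h)

end

theorem id_mono (G : SetFunctor.{u}) : (RelConn.id G).Mono :=
  fun _ _ _ _ hr _ _ h H L hL Z s a hs =>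
    hL.1 _ _ _ _ (fun _ _ ⟨x, hs, h⟩ => ⟨x, hs, hr _ _ h⟩) _ _ (h H L hL Z s a hs)

theorem id_rel_natural_iff (G : SetFunctor.{u}) {X X' Y Y' : Type u} (f : X' → X) (g : Y' → Y)
    (r : X → Y → Prop) (b : G.obj X') (c : G.obj Y') :
    (RelConn.id G).rel (rcomp (rconv (graph g)) (rcomp r (graph f))) b c ↔
      (RelConn.id G).rel r (G.map (TypeCat.ofHom f) b) (G.map (TypeCat.ofHom g) c) := by
  constructor
  · intro h H L hL Z s a hs
    have hpull := h H L hL Z _ a ((hL.2.rel_conv_graph_comp_iff f s a b).2 hs)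
    refine (hL.2.rel_conv_graph_comp_iff g _ a c).1 (hL.1 _ _ _ _ ?_ a c hpull)
    rintro z y' ⟨x', ⟨x, hs, rfl⟩, y, ⟨_, rfl, hr⟩, rfl⟩
    exact ⟨g y', ⟨f x', hs, hr⟩, rfl⟩
  · intro h H L hL Z s a hs
    have hpush := h H L hL Z _ a (hL.rel_graph_comp f hs)
    refine hL.1 _ _ _ _ ?_ a c ((hL.2.rel_conv_graph_comp_iff g _ a c).2 hpush)
    rintro z y' ⟨_, ⟨_, ⟨x', hs, rfl⟩, hr⟩, rfl⟩
    exact ⟨x', hs, g y', ⟨f x', rfl, hr⟩, rfl⟩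

theorem id_isConnector (G : SetFunctor.{u}) : (RelConn.id G).IsConnector :=
  ⟨id_mono G, (natural_iff _).2 fun _ _ _ _ f g r => id_rel_natural_iff G f g r⟩

theorem id_rel_diag (G : SetFunctor.{u}) {X : Type u} (b : G.obj X) :
    (RelConn.id G).rel (diag X) b b :=
  fun _ _ hL _ _ a hs => hL.1 _ _ _ _ (fun _ x hs => ⟨x, hs, rfl⟩) a b hs

/-- `K • α` in the notation of the paper. -/
def bullet {F G H : SetFunctor.{u}} (K : RelConn G H) (α : F ⟶ G) : RelConn F H where
  rel := fun {X _} r => rcomp (K.rel r) (graph (α.app X))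

theorem IsConnector.bullet {F G H : SetFunctor.{u}} {K : RelConn G H} (hK : K.IsConnector)
    (α : F ⟶ G) : (K.bullet α).IsConnector := by
  refine ⟨fun _ _ _ _ hr a _ ⟨_, hα, h⟩ => ⟨_, hα, hK.1 _ _ _ _ hr _ _ h⟩, ?_⟩
  refine (natural_iff _).2 fun X X' Y Y' f g r a b => ?_
  have hα : α.app X (F.map (TypeCat.ofHom f) a) = G.map (TypeCat.ofHom f) (α.app X' a) :=
    NatTrans.naturality_apply α (TypeCat.ofHom f) a
  calc (K.bullet α).rel (rcomp (rconv (graph g)) (rcomp r (graph f))) a b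
      ↔ K.rel (rcomp (rconv (graph g)) (rcomp r (graph f))) (α.app X' a) b :=
        ⟨fun ⟨_, hα, h⟩ => hα ▸ h, fun h => ⟨_, rfl, h⟩⟩
    _ ↔ K.rel r (G.map (TypeCat.ofHom f) (α.app X' a)) (H.map (TypeCat.ofHom g) b) :=
        (K.natural_iff.1 hK.2) X X' Y Y' f g r _ b
    _ ↔ (K.bullet α).rel r (F.map (TypeCat.ofHom f) a) (H.map (TypeCat.ofHom g) b) := by
        rw [← hα]
        exact ⟨fun h => ⟨_, rfl, h⟩, fun ⟨_, hα, h⟩ => hα ▸ h⟩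

end RelConn

theorem idBullet_eq_bullet {F G : SetFunctor.{u}} (α : F ⟶ G) :
    idBullet α = (RelConn.id G).bullet α :=
  rfl

theorem idBullet_le_of_extends {F G : SetFunctor.{u}} {α : F ⟶ G} {L : RelConn F G}
    (hL : L.IsConnector) (hext : L.Extends α) : (idBullet α).le L := by
  rintro X Y r a c ⟨_, rfl, h⟩
  simpa only [rcomp_diag] using h F L hL X (diag X) a (hext X a _ rfl)

/-- for a natural transformation `α : F ⇒ G`, the connector `id_G • α`
(with `(id_G • α) r = (id_G r) · α_X`) is the least relational connector `F → G`
extending `α`; in particular `id_G` is the least relational connector extending the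
identity natural transformation on `G`. -/
theorem idBullet_least_extending (F G : SetFunctor.{u}) (α : F ⟶ G) :
    (idBullet α).IsConnector ∧ (idBullet α).Extends α ∧
      (∀ L : RelConn F G, L.IsConnector → L.Extends α → (idBullet α).le L) ∧
      ((RelConn.id G).Extends (CategoryTheory.CategoryStruct.id G) ∧
        ∀ L : RelConn G G, L.IsConnector →
          L.Extends (CategoryTheory.CategoryStruct.id G) → (RelConn.id G).le L) := by
  refine ⟨idBullet_eq_bullet α ▸ (RelConn.id_isConnector G).bullet α, ?_,
    fun L hL hext => idBullet_le_of_extends hL hext, ?_, ?_⟩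
  · rintro X a _ rfl
    exact ⟨_, rfl, RelConn.id_rel_diag G _⟩
  · rintro X b _ rfl
    exact RelConn.id_rel_diag G b
  · intro L hL hext X Y r b c h
    exact idBullet_le_of_extends hL hext X Y r b c ⟨b, rfl, h⟩
end

section
/- Transfer of bisimilarity: let K : F → F, L : F → G, and H : G → G be relational connectors between Set functors such that L · K · L° ≤ H. Then for all coalgebras, ≼_L ∘ ≼_K ∘ (≼_L)° ⊆ ≼_H and ≃_L ∘ ≃_K ∘ (≃_L)° ⊆ ≃_H; that is, if c' ≼_L d', c ≼_K c', and c ≼_L d (with c,c' states of F-coalgebras and d,d' states of G-coalgebras, using the converse appropriately), then d ≼_H d', and likewise for bisimilarity. -/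
/-! Given an `L`-simulation `r₁`, a `K`-simulation `r₂` and an `L`-simulation `r₃`, simulations
compose along connector composition and converse, so `r₃ · r₂ · r₁°` is an `L · K · L°`-simulation
and hence an `H`-simulation. For bisimulations the converse `r₁ · r₂° · r₃°` has the same shape,
with the `K`-simulation `r₂°` in the middle. -/

open CategoryTheory

universe u

/-- `L`-similarity: `x ≼_L y` iff some `L`-simulation relates `x` to `y`. -/
def CoalgSimilar {F G : SetFunctor.{u}} (L : RelConn F G) {C D : Type u}
    (γ : C → F.obj C) (δ : D → G.obj D) : C → D → Prop :=
  fun x y => ∃ r, IsSim L γ δ r ∧ r x y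

theorem rconv_rcomp {X Y Z : Type u} (s : Y → Z → Prop) (r : X → Y → Prop) :
    rconv (rcomp s r) = rcomp (rconv r) (rconv s) := by
  funext z x
  exact propext ⟨fun ⟨y, hxy, hyz⟩ => ⟨y, hyz, hxy⟩, fun ⟨y, hyz, hxy⟩ => ⟨y, hxy, hyz⟩⟩

theorem rconv_rconv {X Y : Type u} (r : X → Y → Prop) : rconv (rconv r) = r := rfl

theorem rcomp_assoc {W X Y Z : Type u} (t : Y → Z → Prop) (s : X → Y → Prop)
    (r : W → X → Prop) : rcomp t (rcomp s r) = rcomp (rcomp t s) r := by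
  funext w z
  exact propext ⟨fun ⟨y, ⟨x, hwx, hxy⟩, hyz⟩ => ⟨x, hwx, ⟨y, hxy, hyz⟩⟩,
    fun ⟨x, hwx, ⟨y, hxy, hyz⟩⟩ => ⟨y, ⟨x, hwx, hxy⟩, hyz⟩⟩

namespace IsSim

variable {F G H : SetFunctor.{u}} {C D E : Type u}
  {γ : C → F.obj C} {δ : D → G.obj D} {ε : E → H.obj E}

theorem comp {K : RelConn F G} {L : RelConn G H} {r : C → D → Prop} {s : D → E → Prop}
    (hr : IsSim K γ δ r) (hs : IsSim L δ ε s) : IsSim (L.comp K) γ ε (rcomp s r) :=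
  fun _ _ ⟨y, hxy, hyz⟩ => ⟨D, r, s, rfl, δ y, hr _ _ hxy, hs _ _ hyz⟩

theorem conv {L : RelConn F G} {r : C → D → Prop} (hr : IsSim L γ δ r) :
    IsSim L.conv δ γ (rconv r) :=
  fun y x h => hr x y h

theorem mono {K L : RelConn F G} {r : C → D → Prop} (hKL : K.le L) (hr : IsSim K γ δ r) :
    IsSim L γ δ r :=
  fun x y h => hKL _ _ _ _ _ (hr x y h)

theorem transfer {K : RelConn F F} {L : RelConn F G} {H : RelConn G G}
    (hle : ((L.comp K).comp L.conv).le H) {C' D' : Type u} {γ' : C' → F.obj C'}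
    {δ' : D' → G.obj D'} {r₁ : C → D → Prop} {r₂ : C → C' → Prop} {r₃ : C' → D' → Prop}
    (h₁ : IsSim L γ δ r₁) (h₂ : IsSim K γ γ' r₂) (h₃ : IsSim L γ' δ' r₃) :
    IsSim H δ δ' (rcomp (rcomp r₃ r₂) (rconv r₁)) :=
  (h₁.conv.comp (h₂.comp h₃)).mono hle

end IsSim

theorem IsBisim.transfer {F G : SetFunctor.{u}} {K : RelConn F F} {L : RelConn F G}
    {H : RelConn G G} (hle : ((L.comp K).comp L.conv).le H) {C C' D D' : Type u}
    {γ : C → F.obj C} {γ' : C' → F.obj C'} {δ : D → G.obj D} {δ' : D' → G.obj D'}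
    {r₁ : C → D → Prop} {r₂ : C → C' → Prop} {r₃ : C' → D' → Prop}
    (h₁ : IsSim L γ δ r₁) (h₂ : IsBisim K γ γ' r₂) (h₃ : IsSim L γ' δ' r₃) :
    IsBisim H δ δ' (rcomp (rcomp r₃ r₂) (rconv r₁)) := by
  refine ⟨IsSim.transfer hle h₁ h₂.1 h₃, ?_⟩
  rw [rconv_rcomp, rconv_rcomp, rconv_rconv, rcomp_assoc]
  exact IsSim.transfer hle h₃ h₂.2 h₁

theorem transfer_of_bisimilarity_general (F G : SetFunctor.{u})
    (K : RelConn F F) (L : RelConn F G) (H : RelConn G G)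
    (hle : ((L.comp K).comp L.conv).le H)
    (C C' D D' : Type u) (γ : C → F.obj C) (γ' : C' → F.obj C')
    (δ : D → G.obj D) (δ' : D' → G.obj D') :
    (∀ (c : C) (c' : C') (d : D) (d' : D'),
      CoalgSimilar L γ δ c d → CoalgSimilar K γ γ' c c' → CoalgSimilar L γ' δ' c' d' →
        CoalgSimilar H δ δ' d d') ∧
    (∀ (c : C) (c' : C') (d : D) (d' : D'),
      BisimilarHet L γ δ c d → Bisimilar K γ γ' c c' → BisimilarHet L γ' δ' c' d' →
        Bisimilar H δ δ' d d') := by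
  constructor
  · rintro c c' d d' ⟨r₁, h₁, hcd⟩ ⟨r₂, h₂, hcc'⟩ ⟨r₃, h₃, hc'd'⟩
    exact ⟨_, IsSim.transfer hle h₁ h₂ h₃, c, hcd, c', hcc', hc'd'⟩
  · rintro c c' d d' ⟨r₁, h₁, hcd⟩ ⟨r₂, h₂, hcc'⟩ ⟨r₃, h₃, hc'd'⟩
    exact ⟨_, IsBisim.transfer hle h₁.1 h₂ h₃.1, c, hcd, c', hcc', hc'd'⟩

/-- transfer of (bi)similarity: if `L · K · L° ≤ H`, then
`≼_L ∘ ≼_K ∘ (≼_L)° ⊆ ≼_H` and `≃_L ∘ ≃_K ∘ (≃_L)° ⊆ ≃_H`; elementwise, if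
`c ≼_L d`, `c ≼_K c'` and `c' ≼_L d'`, then `d ≼_H d'`, and likewise for
bisimilarity. -/
theorem transfer_of_bisimilarity (F G : SetFunctor.{u})
    (K : RelConn F F) (L : RelConn F G) (H : RelConn G G)
    (hK : K.IsConnector) (hL : L.IsConnector) (hH : H.IsConnector)
    (hle : ((L.comp K).comp L.conv).le H)
    (C C' D D' : Type u) (γ : C → F.obj C) (γ' : C' → F.obj C')
    (δ : D → G.obj D) (δ' : D' → G.obj D') :
    (∀ (c : C) (c' : C') (d : D) (d' : D'),
      CoalgSimilar L γ δ c d → CoalgSimilar K γ γ' c c' → CoalgSimilar L γ' δ' c' d' →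
        CoalgSimilar H δ δ' d d') ∧
    (∀ (c : C) (c' : C') (d : D) (d' : D'),
      BisimilarHet L γ δ c d → Bisimilar K γ γ' c c' → BisimilarHet L γ' δ' c' d' →
        Bisimilar H δ δ' d d') :=
  transfer_of_bisimilarity_general F G K L H hle C C' D D' γ γ' δ δ'
end

section
/- Kantorovich relational connectors are relational connectors: for Set functors F, G and an arity-preserving relation Λ between monotone predicate liftings of F and monotone predicate liftings of G, the assignment L_Λ, defined by a (L_Λ r) b iff for every n-ary pair (λ,μ) ∈ Λ and all subsets A₁,…,Aₙ ⊆ X, a ∈ λ_X(A₁,…,Aₙ) implies b ∈ μ_Y(r[A₁],…,r[Aₙ]), satisfies monotonicity and naturality. -/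
open CategoryTheory

universe u

/-- `L`-similarity: `x ≼_L y` iff some `L`-simulation relates `x` to `y`. -/
def LSimilar {F G : SetFunctor.{u}} (L : RelConn F G) {C D : Type u}
    (γ : C → F.obj C) (δ : D → G.obj D) : C → D → Prop :=
  fun x y => ∃ r, IsSim L γ δ r ∧ r x y

/-!
`L_Λ` is the intersection, over the pairs `(λ, μ) ∈ Λ`, of the relations
`a ∈ λ(A) → b ∈ μ(r[A])`, so it suffices to treat one pair. Monotonicity in `r` is
monotonicity of `μ`. For naturality, `(g° · r · f)[A] = g⁻¹[r[f[A]]]`, and the naturality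
squares of `λ` and `μ` move `F f` and `G g` across; the two directions differ only by the
inclusions `A ⊆ f⁻¹[f[A]]` and `f[f⁻¹[A]] ⊆ A`, which monotonicity of `λ`, resp. `μ`, absorbs.
-/

theorem rcomp_rconv_graph_rcomp_graph {X X' Y Y' : Type u} (f : X' → X) (g : Y' → Y)
    (r : X → Y → Prop) :
    rcomp (rconv (graph g)) (rcomp r (graph f)) = fun x' y' => r (f x') (g y') := by
  funext x' y'
  apply propext
  constructor
  · rintro ⟨_, ⟨_, rfl, hr⟩, rfl⟩
    exact hr
  · intro hr
    exact ⟨g y', ⟨f x', rfl, hr⟩, rfl⟩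

theorem rimage_mono {X Y : Type u} (r : X → Y → Prop) {A B : Set X} (h : A ⊆ B) :
    rimage r A ⊆ rimage r B :=
  fun _ ⟨x, hx, hxy⟩ => ⟨x, h hx, hxy⟩

theorem rimage_mono_rel {X Y : Type u} {r₁ r₂ : X → Y → Prop} (hr : ∀ x y, r₁ x y → r₂ x y)
    (A : Set X) : rimage r₁ A ⊆ rimage r₂ A :=
  fun _ ⟨x, hx, hxy⟩ => ⟨x, hx, hr x _ hxy⟩

theorem rimage_comap {X X' Y Y' : Type u} (f : X' → X) (g : Y' → Y) (r : X → Y → Prop)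
    (A : Set X') : rimage (fun x' y' => r (f x') (g y')) A = g ⁻¹' rimage r (f '' A) := by
  ext y'
  simp only [rimage, Set.mem_ofPred_eq, Set.mem_preimage, Set.exists_mem_image]

theorem RelConn.natural_iff_s18 {F G : SetFunctor.{u}} (L : RelConn F G) :
    L.Natural ↔ ∀ (X X' Y Y' : Type u) (f : X' → X) (g : Y' → Y) (r : X → Y → Prop) a b,
      L.rel (fun x' y' => r (f x') (g y')) a b ↔
        L.rel r (F.map (TypeCat.ofHom f) a) (G.map (TypeCat.ofHom g) b) := by
  simp only [RelConn.Natural, rcomp_rconv_graph_rcomp_graph, funext_iff, eq_iff_iff]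

def kantorovichRel {F G : SetFunctor.{u}} {n : ℕ} (lam : PredLifting F n) (mu : PredLifting G n)
    {X Y : Type u} (r : X → Y → Prop) (a : F.obj X) (b : G.obj Y) : Prop :=
  ∀ A : Fin n → Set X, a ∈ lam.app X A → b ∈ mu.app Y (fun i => rimage r (A i))

section kantorovichRel

variable {F G : SetFunctor.{u}} {n : ℕ} {lam : PredLifting F n} {mu : PredLifting G n}

theorem kantorovichRel_mono (hmu : mu.IsMonotone) {X Y : Type u} {r₁ r₂ : X → Y → Prop}
    (hr : ∀ x y, r₁ x y → r₂ x y) {a : F.obj X} {b : G.obj Y}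
    (h : kantorovichRel lam mu r₁ a b) : kantorovichRel lam mu r₂ a b :=
  fun A ha => hmu Y _ _ (fun i => rimage_mono_rel hr (A i)) (h A ha)

theorem kantorovichRel_comap_iff (hlam : lam.IsMonotone) (hmu : mu.IsMonotone)
    {X X' Y Y' : Type u} (f : X' → X) (g : Y' → Y) (r : X → Y → Prop)
    (a : F.obj X') (b : G.obj Y') :
    kantorovichRel lam mu (fun x' y' => r (f x') (g y')) a b ↔
      kantorovichRel lam mu r (F.map (TypeCat.ofHom f) a) (G.map (TypeCat.ofHom g) b) := by
  simp only [kantorovichRel, rimage_comap]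
  constructor
  · intro h A ha
    have hb := h _ ((lam.natural X' X f A a).mp ha)
    rw [mu.natural]
    exact hmu Y' _ _
      (fun i => Set.preimage_mono (rimage_mono r (Set.image_preimage_subset f (A i)))) hb
  · intro h A ha
    refine (mu.natural Y' Y g _ b).mp (h _ ((lam.natural X' X f _ a).mpr ?_))
    exact hlam X' _ _ (fun i => Set.subset_preimage_image f (A i)) ha

end kantorovichRel

theorem kantorovich_rel_iff {F G : SetFunctor.{u}}
    {Λ : ∀ n : ℕ, PredLifting F n → PredLifting G n → Prop} {X Y : Type u} (r : X → Y → Prop)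
    (a : F.obj X) (b : G.obj Y) :
    (kantorovich Λ).rel r a b ↔
      ∀ (n : ℕ) (lam : PredLifting F n) (mu : PredLifting G n), Λ n lam mu →
        kantorovichRel lam mu r a b :=
  Iff.rfl

/-- Kantorovich relational connectors are relational connectors: for an
arity-preserving relation `Λ` between monotone predicate liftings of `F` and of `G`,
the assignment `L_Λ` is monotone and natural. -/
theorem kantorovich_isConnector (F G : SetFunctor.{u})
    (Λ : ∀ n : ℕ, PredLifting F n → PredLifting G n → Prop)
    (hmono : ∀ (n : ℕ) (lam : PredLifting F n) (mu : PredLifting G n),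
      Λ n lam mu → lam.IsMonotone ∧ mu.IsMonotone) :
    (kantorovich Λ).IsConnector := by
  refine ⟨?_, (kantorovich Λ).natural_iff_s18.mpr ?_⟩
  · intro X Y r₁ r₂ hr a b
    simp only [kantorovich_rel_iff]
    exact fun hab n lam mu hΛ => kantorovichRel_mono (hmono n lam mu hΛ).2 hr (hab n lam mu hΛ)
  · intro X X' Y Y' f g r a b
    simp only [kantorovich_rel_iff]
    exact forall₄_congr fun n lam mu hΛ =>
      kantorovichRel_comap_iff (hmono n lam mu hΛ).1 (hmono n lam mu hΛ).2 f g r a b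
end

section
/- Let Λ be an arity-preserving relation between monotone predicate liftings of Set functors F and G, and Θ an arity-preserving relation between monotone predicate liftings of G and H. Then (1) L_Θ · L_Λ ≤ L_{Θ·Λ}, where Θ·Λ is the relational composite of the relations Λ and Θ; and (2) (L_Λ)° = L_{(Λ̄)°}, where Λ̄ = {(λ̄,μ̄) | (λ,μ) ∈ Λ} is the relation of dual predicate liftings and (−)° is relational converse. -/
/-! Images compose, `(s · t)[A] = s[t[A]]`, which gives the composition law at once. For the
converse, the complement inclusions `r°[(r[B])ᶜ] ⊆ Bᶜ` and `A ⊆ (r[(r°[A])ᶜ])ᶜ` let a monotone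
lifting transport a constraint on `r°`-images into one on the dual pair, and back. -/

open CategoryTheory

universe u

theorem rimage_rcomp {X Y Z : Type u} (s : Y → Z → Prop) (t : X → Y → Prop) (A : Set X) :
    rimage (rcomp s t) A = rimage s (rimage t A) := by
  ext z
  constructor
  · rintro ⟨x, hx, y, hxy, hyz⟩
    exact ⟨y, ⟨x, hx, hxy⟩, hyz⟩
  · rintro ⟨y, ⟨x, hx, hxy⟩, hyz⟩
    exact ⟨x, hx, y, hxy, hyz⟩

theorem rimage_rconv_compl_rimage_subset_compl {X Y : Type u} (r : X → Y → Prop) (B : Set X) :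
    rimage (rconv r) (rimage r B)ᶜ ⊆ Bᶜ := by
  rintro x ⟨y, hy, hxy⟩ hx
  exact hy ⟨x, hx, hxy⟩

theorem subset_compl_rimage_compl_rimage_rconv {X Y : Type u} (r : X → Y → Prop) (A : Set Y) :
    A ⊆ (rimage r (rimage (rconv r) A)ᶜ)ᶜ :=
  Set.subset_compl_comm.mp (rimage_rconv_compl_rimage_subset_compl (rconv r) A)

theorem RelConn.le_antisymm {F G : SetFunctor.{u}} {L K : RelConn F G} (hLK : L.le K)
    (hKL : K.le L) : L = K := by
  obtain ⟨L⟩ := L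
  obtain ⟨K⟩ := K
  congr
  funext X Y r a b
  exact propext ⟨hLK X Y r a b, hKL X Y r a b⟩

namespace PredLifting

variable {F G H : SetFunctor.{u}}

def relComp (Λ : ∀ n : ℕ, PredLifting F n → PredLifting G n → Prop)
    (Θ : ∀ n : ℕ, PredLifting G n → PredLifting H n → Prop) :
    ∀ n : ℕ, PredLifting F n → PredLifting H n → Prop :=
  fun n lam pi => ∃ mu, Λ n lam mu ∧ Θ n mu pi

def dualConv (Λ : ∀ n : ℕ, PredLifting F n → PredLifting G n → Prop) :
    ∀ n : ℕ, PredLifting G n → PredLifting F n → Prop :=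
  fun n mu' lam' => ∃ lam mu, Λ n lam mu ∧ lam' = lam.dual ∧ mu' = mu.dual

end PredLifting

open PredLifting

section Kantorovich

variable {F G H : SetFunctor.{u}} (Λ : ∀ n : ℕ, PredLifting F n → PredLifting G n → Prop)

theorem kantorovich_comp_le (Θ : ∀ n : ℕ, PredLifting G n → PredLifting H n → Prop) :
    ((kantorovich Θ).comp (kantorovich Λ)).le (kantorovich (relComp Λ Θ)) := by
  rintro X Z r a c ⟨Y, t, s, rfl, b, hab, hbc⟩ n lam pi ⟨mu, hlm, hmp⟩ A ha
  simpa only [rimage_rcomp] using hbc n mu pi hmp _ (hab n lam mu hlm A ha)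

theorem kantorovich_conv_le (hmu : ∀ n lam mu, Λ n lam mu → PredLifting.IsMonotone mu) :
    (kantorovich Λ).conv.le (kantorovich (dualConv Λ)) := by
  rintro X Y r b a hab n mu' lam' ⟨lam, mu, hlm, rfl, rfl⟩ B hb ha
  refine hb (hmu n lam mu hlm X _ _ (fun i => ?_) (hab n lam mu hlm _ ha))
  exact rimage_rconv_compl_rimage_subset_compl r (B i)

theorem kantorovich_dualConv_le (hlam : ∀ n lam mu, Λ n lam mu → PredLifting.IsMonotone lam) :
    (kantorovich (dualConv Λ)).le (kantorovich Λ).conv := by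
  intro X Y r b a h n lam mu hlm A ha
  by_contra hb
  have hb' : b ∈ mu.dual.app X fun i => (rimage (rconv r) (A i))ᶜ := by
    simpa only [PredLifting.dual, compl_compl, Set.mem_compl_iff] using hb
  refine h n mu.dual lam.dual ⟨lam, mu, hlm, rfl, rfl⟩ _ hb' ?_
  exact hlam n lam mu hlm Y _ _ (fun i => subset_compl_rimage_compl_rimage_rconv r (A i)) ha

end Kantorovich

theorem kantorovich_comp_conv_general (F G H : SetFunctor.{u})
    (Λ : ∀ n : ℕ, PredLifting F n → PredLifting G n → Prop)
    (Θ : ∀ n : ℕ, PredLifting G n → PredLifting H n → Prop)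
    (hΛ : ∀ (n : ℕ) (lam : PredLifting F n) (mu : PredLifting G n),
      Λ n lam mu → lam.IsMonotone ∧ mu.IsMonotone) :
    ((kantorovich Θ).comp (kantorovich Λ)).le
        (kantorovich (fun n lam pi => ∃ mu, Λ n lam mu ∧ Θ n mu pi)) ∧
    (kantorovich Λ).conv =
      kantorovich (fun n (mu' : PredLifting G n) (lam' : PredLifting F n) =>
        ∃ (lam : PredLifting F n) (mu : PredLifting G n),
          Λ n lam mu ∧ lam' = lam.dual ∧ mu' = mu.dual) :=
  ⟨kantorovich_comp_le Λ Θ,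
    RelConn.le_antisymm (kantorovich_conv_le Λ fun n _ _ h => (hΛ n _ _ h).2)
      (kantorovich_dualConv_le Λ fun n _ _ h => (hΛ n _ _ h).1)⟩

/-- (1) `L_Θ · L_Λ ≤ L_{Θ·Λ}` where `Θ·Λ` is the relational composite;
(2) `(L_Λ)° = L_{(Λ̄)°}` where `Λ̄` is the relation of dual predicate liftings and
`(−)°` is relational converse. -/
theorem kantorovich_comp_conv (F G H : SetFunctor.{u})
    (Λ : ∀ n : ℕ, PredLifting F n → PredLifting G n → Prop)
    (Θ : ∀ n : ℕ, PredLifting G n → PredLifting H n → Prop)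
    (hΛ : ∀ (n : ℕ) (lam : PredLifting F n) (mu : PredLifting G n),
      Λ n lam mu → lam.IsMonotone ∧ mu.IsMonotone)
    (hΘ : ∀ (n : ℕ) (mu : PredLifting G n) (pi : PredLifting H n),
      Θ n mu pi → mu.IsMonotone ∧ pi.IsMonotone) :
    ((kantorovich Θ).comp (kantorovich Λ)).le
        (kantorovich (fun n lam pi => ∃ mu, Λ n lam mu ∧ Θ n mu pi)) ∧
    (kantorovich Λ).conv =
      kantorovich (fun n (mu' : PredLifting G n) (lam' : PredLifting F n) =>
        ∃ (lam : PredLifting F n) (mu : PredLifting G n),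
          Λ n lam mu ∧ lam' = lam.dual ∧ mu' = mu.dual) :=
  kantorovich_comp_conv_general F G H Λ Θ hΛ
end
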